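/- Let m, n, k be integers with m ≥ 1, n ≥ 1, k ≥ 2, satisfying N_m = F_n · F_k. Then 0 < |√5·a·α^m/(F_n·γ^k) − 1| < 2.637 · γ^{−k}, where α is the unique real root of X³ − X² − 1, a = α²/(α³ + 2) and γ = (1 + √5)/2; in particular √5·a·α^m ≠ F_n·γ^k. -/

import Mathlib

/-!
Write `e m = N m - a α ^ m`. The sequence `e` satisfies the recurrence of the quadratic factor
`X ^ 2 + (α - 1) X + α⁻¹` of `X ^ 3 - X ^ 2 - 1`, whose roots have modulus `α ^ (-1/2)`, so the
norm form of `(e m, e (m + 1))` attached to that factor is divided by `α` at each step; this gives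
`|e m| ≤ 1/2`. By Binet's formula, `N m = F n F k` turns `√5 a α ^ m - F n γ ^ k` into
`-√5 e m - F n (-γ⁻¹) ^ k`, which is small. It does not vanish because `√5 ∉ ℚ(α)`: the degree `2`
of `√5` does not divide `[ℚ(α) : ℚ] = 3`.
-/

/-- The Narayana's cows sequence: N 0 = 0, N 1 = N 2 = 1, N (m+3) = N (m+2) + N m. -/
def narayana : ℕ → ℕ
  | 0 => 0
  | 1 => 1
  | 2 => 1
  | m + 3 => narayana (m + 2) + narayana m

open Polynomial IntermediateField
open scoped goldenRatio

lemma natDegree_minpoly_dvd_of_mem_adjoin {K L : Type*} [Field K] [Field L] [Algebra K L]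
    {x y : L} (hx : IsIntegral K x) (hy : y ∈ K⟮x⟯) :
    (minpoly K y).natDegree ∣ (minpoly K x).natDegree := by
  have := adjoin.finiteDimensional hx
  rw [← adjoin.finrank hx, ← minpoly_eq ⟨y, hy⟩]
  exact minpoly.degree_dvd (.of_finite K _)

lemma natDegree_minpoly_sqrt_five : (minpoly ℚ √5).natDegree = 2 := by
  have hroot : aeval √5 (X ^ 2 - C 5 : ℚ[X]) = 0 := by simp
  have hmonic : (X ^ 2 - C 5 : ℚ[X]).Monic := monic_X_pow_sub_C _ two_ne_zero
  refine le_antisymm ?_ ((minpoly.two_le_natDegree_iff ⟨_, hmonic, hroot⟩).2 ?_)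
  · simpa [natDegree_X_pow_sub_C] using natDegree_le_natDegree (minpoly.min ℚ √5 hmonic hroot)
  · rintro ⟨q, hq⟩
    exact Nat.prime_five.irrational_sqrt ⟨q, by simpa using hq⟩

lemma sqrt_five_notMem_adjoin {x : ℝ} (hx : IsIntegral ℚ x)
    (hodd : Odd (minpoly ℚ x).natDegree) : √5 ∉ ℚ⟮x⟯ := fun h ↦ by
  have := natDegree_minpoly_dvd_of_mem_adjoin hx h
  rw [natDegree_minpoly_sqrt_five] at this
  exact Nat.not_even_iff_odd.2 hodd (even_iff_two_dvd.2 this)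

lemma not_isRoot_X_pow_three_sub_X_sq_sub_one (r : ℚ) :
    ¬ (X ^ 3 - X ^ 2 - 1 : ℚ[X]).IsRoot r := by
  intro hr
  have hmonic : (X ^ 3 - X ^ 2 - 1 : ℤ[X]).Monic := by monicity!
  obtain ⟨z, rfl⟩ := isInteger_of_is_root_of_monic (K := ℚ) hmonic (r := r) (by simpa using hr)
  have hz : z ^ 2 * (z - 1) = 1 := by
    have : (z : ℚ) ^ 3 - z ^ 2 - 1 = 0 := by simpa using hr
    exact_mod_cast (by linear_combination this : (z : ℚ) ^ 2 * (z - 1) = 1)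
  rcases Int.eq_one_or_neg_one_of_mul_eq_one' hz with ⟨h1, h2⟩ | ⟨h1, h2⟩ <;> nlinarith

lemma irreducible_X_pow_three_sub_X_sq_sub_one : Irreducible (X ^ 3 - X ^ 2 - 1 : ℚ[X]) := by
  have hdeg : (X ^ 3 - X ^ 2 - 1 : ℚ[X]).natDegree = 3 := by compute_degree!
  rw [irreducible_iff_roots_eq_zero_of_degree_le_three (by omega) (by omega),
    Multiset.eq_zero_iff_forall_notMem]
  intro r hr
  exact not_isRoot_X_pow_three_sub_X_sq_sub_one r (isRoot_of_mem_roots hr)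

lemma sqrt_five_notMem_adjoin_of_cubic {α : ℝ} (hα : α ^ 3 - α ^ 2 - 1 = 0) : √5 ∉ ℚ⟮α⟯ := by
  have hmonic : (X ^ 3 - X ^ 2 - 1 : ℚ[X]).Monic := by monicity!
  have hroot : aeval α (X ^ 3 - X ^ 2 - 1 : ℚ[X]) = 0 := by simp [hα]
  refine sqrt_five_notMem_adjoin ⟨_, hmonic, hroot⟩ ?_
  rw [← minpoly.eq_of_irreducible_of_monic irreducible_X_pow_three_sub_X_sq_sub_one hroot hmonic]
  exact ⟨1, by compute_degree!⟩

lemma sqrt_five_mul_ne_mul_goldenRatio_pow {K : IntermediateField ℚ ℝ} (hK : √5 ∉ K) {t : ℝ}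
    (ht : t ∈ K) {c : ℚ} (hc : c ≠ 0) (k : ℕ) : √5 * t ≠ c * φ ^ k := by
  intro h
  -- `φ ^ k = F (k + 1) - ψ F k` writes `c φ ^ k` as `r + s √5` with rationals `r ≠ 0` and `s`.
  set s : ℚ := c * Nat.fib k / 2
  set r : ℚ := c * (Nat.fib (k + 1) - Nat.fib k / 2)
  have hr : r ≠ 0 := by
    have : (Nat.fib k : ℚ) < 2 * Nat.fib (k + 1) := by
      have := Nat.fib_le_fib_succ (n := k)
      have : 0 < Nat.fib (k + 1) := Nat.fib_pos.2 k.succ_pos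
      exact_mod_cast (by omega : Nat.fib k < 2 * Nat.fib (k + 1))
    exact mul_ne_zero hc (by linarith)
  have hsplit : √5 * (t - s) = r := by
    rw [← Real.fib_succ_sub_goldenConj_mul_fib, Real.goldenConj] at h
    simp only [s, r, Rat.cast_mul, Rat.cast_div, Rat.cast_sub, Rat.cast_natCast, Rat.cast_ofNat]
    linear_combination h
  have hts : t - s ≠ 0 := fun h0 ↦ hr <| by
    exact_mod_cast (by simpa [h0] using hsplit.symm : (r : ℝ) = 0)
  exact hK (by
    rw [eq_div_of_mul_eq hts hsplit]
    exact div_mem (SubfieldClass.ratCast_mem K r) (sub_mem ht (SubfieldClass.ratCast_mem K s)))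

lemma abs_sqrt_five_mul_div_sub_one_lt {n k : ℕ} (hn : 1 ≤ n) {t : ℝ}
    (ht : |(Nat.fib n : ℝ) * Nat.fib k - t| ≤ 1 / 2) :
    |√5 * t / (Nat.fib n * φ ^ k) - 1| < 2.637 * φ ^ (-(k : ℤ)) := by
  set F : ℝ := (Nat.fib n : ℝ)
  have hF : 1 ≤ F := Nat.one_le_cast.2 (Nat.fib_pos.2 hn)
  have hφk : 1 ≤ φ ^ k := one_le_pow₀ Real.one_lt_goldenRatio.le
  have hsqrt : √5 < 3 := by rw [Real.sqrt_lt' three_pos]; norm_num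
  have hψk : |ψ ^ k| = (φ ^ k)⁻¹ := by
    rw [abs_pow, abs_of_neg Real.goldenConj_neg, ← Real.inv_goldenRatio, inv_pow]
  have hbinet : √5 * Nat.fib k = φ ^ k - ψ ^ k := by
    rw [Real.coe_fib_eq]; field_simp
  have hdiff : |√5 * t - F * φ ^ k| ≤ √5 / 2 + F * (φ ^ k)⁻¹ := calc
    |√5 * t - F * φ ^ k| = |√5 * (F * Nat.fib k - t) + F * ψ ^ k| := by
      rw [← abs_neg]; congr 1; linear_combination (-F) * hbinet
    _ ≤ √5 * |F * Nat.fib k - t| + F * |ψ ^ k| := by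
      grw [abs_add_le, abs_mul, abs_mul, abs_of_pos (by positivity : (0 : ℝ) < √5),
        abs_of_pos (by positivity : 0 < F)]
    _ ≤ √5 / 2 + F * (φ ^ k)⁻¹ := by
      rw [hψk]; nlinarith [Real.sqrt_nonneg 5]
  have hpos : 0 < F * φ ^ k := by positivity
  rw [div_sub_one hpos.ne', abs_div, abs_of_pos hpos, zpow_neg, zpow_natCast,
    div_lt_iff₀ hpos]
  have hinv_pos : 0 < (φ ^ k)⁻¹ := by positivity
  have hinv_mul : (φ ^ k)⁻¹ * φ ^ k = 1 := inv_mul_cancel₀ (by positivity)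
  have hinv_le : (φ ^ k)⁻¹ ≤ 1 := inv_le_one_of_one_le₀ hφk
  nlinarith

noncomputable def narayanaError (α : ℝ) (m : ℕ) : ℝ :=
  narayana m - α ^ 2 / (α ^ 3 + 2) * α ^ m

-- `|e (m + 1) - β e m| ^ 2` for a non-real root `β` of `X ^ 3 - X ^ 2 - 1`.
noncomputable def narayanaEnergy (α : ℝ) (m : ℕ) : ℝ :=
  narayanaError α (m + 1) ^ 2 + (α - 1) * narayanaError α m * narayanaError α (m + 1)
    + α⁻¹ * narayanaError α m ^ 2

section

variable {α : ℝ}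

lemma bounds_of_cubic (hα : α ^ 3 - α ^ 2 - 1 = 0) : 1.4 < α ∧ α < 1.5 := by
  constructor <;> nlinarith [sq_nonneg (α - 1), sq_nonneg (α + 1)]

lemma narayanaError_add_three (hα : α ^ 3 - α ^ 2 - 1 = 0) (m : ℕ) :
    narayanaError α (m + 3) = narayanaError α (m + 2) + narayanaError α m := by
  simp only [narayanaError, narayana, Nat.cast_add]
  linear_combination (-(α ^ 2 / (α ^ 3 + 2)) * α ^ m) * hα

-- The choice `a = α ^ 2 / (α ^ 3 + 2)` is exactly what makes this hold at `m = 0`.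
lemma narayanaError_quadratic_rec (hα : α ^ 3 - α ^ 2 - 1 = 0) (m : ℕ) :
    narayanaError α (m + 2) + (α - 1) * narayanaError α (m + 1) + α⁻¹ * narayanaError α m = 0 := by
  have hα0 : 0 < α := by linarith [(bounds_of_cubic hα).1]
  have hden : α ^ 3 + 2 ≠ 0 := by positivity
  induction m with
  | zero =>
    simp only [narayanaError, narayana]
    field_simp
    linear_combination (-α ^ 2) * hα
  | succ m ih =>
    rw [narayanaError_add_three hα]
    field_simp at ih ⊢
    linear_combination α * ih - narayanaError α (m + 1) * hα

lemma narayanaEnergy_succ (hα : α ^ 3 - α ^ 2 - 1 = 0) (m : ℕ) :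
    α * narayanaEnergy α (m + 1) = narayanaEnergy α m := by
  have hα0 : α ≠ 0 := by linarith [(bounds_of_cubic hα).1]
  have hrec : narayanaError α (m + 2) =
      -((α - 1) * narayanaError α (m + 1) + α⁻¹ * narayanaError α m) := by
    linear_combination narayanaError_quadratic_rec hα m
  simp only [narayanaEnergy]
  rw [hrec]
  field_simp
  ring

lemma narayanaEnergy_zero (hα : α ^ 3 - α ^ 2 - 1 = 0) : narayanaEnergy α 0 = (α ^ 2 + 3)⁻¹ := by
  have hα0 : 0 < α := by linarith [(bounds_of_cubic hα).1]
  have hden : α ^ 3 + 2 ≠ 0 := by positivity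
  simp only [narayanaEnergy, narayanaError, narayana]
  field_simp
  linear_combination (-α ^ 4 - 2 * α ^ 3 - 8 * α) * hα

lemma narayanaEnergy_mul_pow (hα : α ^ 3 - α ^ 2 - 1 = 0) (m : ℕ) :
    narayanaEnergy α m * α ^ m = (α ^ 2 + 3)⁻¹ := by
  induction m with
  | zero => simp [narayanaEnergy_zero hα]
  | succ m ih => rw [← ih, ← narayanaEnergy_succ hα m]; ring

lemma mul_sq_narayanaError_le (hα : α ^ 3 - α ^ 2 - 1 = 0) (m : ℕ) :
    (1 - α * (α - 1) ^ 2 / 4) * narayanaError α m ^ 2 ≤ α * narayanaEnergy α m := by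
  have hα0 : 0 < α := by linarith [(bounds_of_cubic hα).1]
  have hsq : α * narayanaEnergy α m = (1 - α * (α - 1) ^ 2 / 4) * narayanaError α m ^ 2
      + α * (narayanaError α (m + 1) + (α - 1) / 2 * narayanaError α m) ^ 2 := by
    simp only [narayanaEnergy]; field_simp; ring
  rw [hsq]
  have := sq_nonneg (narayanaError α (m + 1) + (α - 1) / 2 * narayanaError α m)
  nlinarith

lemma abs_narayanaError_le (hα : α ^ 3 - α ^ 2 - 1 = 0) (m : ℕ) :
    |narayanaError α m| ≤ 1 / 2 := by
  obtain ⟨hα₁, hα₂⟩ := bounds_of_cubic hα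
  rcases m with _ | m
  · have hden : 0 < α ^ 3 + 2 := by positivity
    rw [narayanaError, narayana, Nat.cast_zero, pow_zero, mul_one, zero_sub, abs_neg,
      abs_of_nonneg (by positivity), div_le_iff₀ hden]
    nlinarith
  · have hcoef : 0.9 ≤ 1 - α * (α - 1) ^ 2 / 4 := by nlinarith
    have hE := mul_sq_narayanaError_le hα (m + 1)
    have hQ := narayanaEnergy_mul_pow hα (m + 1)
    have hQ0 : 0 ≤ narayanaEnergy α (m + 1) := by nlinarith [sq_nonneg (narayanaError α (m + 1))]
    have hpow : α ≤ α ^ (m + 1) := le_self_pow₀ (by linarith) m.succ_ne_zero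
    have hinv : (α ^ 2 + 3)⁻¹ ≤ 1 / 4.9 := by
      rw [inv_le_comm₀ (by positivity) (by norm_num)]; nlinarith
    apply abs_le_of_sq_le_sq _ (by norm_num)
    nlinarith [mul_le_mul_of_nonneg_left hpow hQ0]

end

theorem linear_form_two_bound_general (α : ℝ) (hα : α ^ 3 - α ^ 2 - 1 = 0)
    (m n k : ℕ) (hn : 1 ≤ n)
    (h : narayana m = Nat.fib n * Nat.fib k) :
    0 < |Real.sqrt 5 * (α ^ 2 / (α ^ 3 + 2)) * α ^ m /
          ((Nat.fib n : ℝ) * ((1 + Real.sqrt 5) / 2) ^ k) - 1| ∧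
    |Real.sqrt 5 * (α ^ 2 / (α ^ 3 + 2)) * α ^ m /
          ((Nat.fib n : ℝ) * ((1 + Real.sqrt 5) / 2) ^ k) - 1|
        < 2.637 * ((1 + Real.sqrt 5) / 2) ^ (-(k : ℤ)) ∧
    Real.sqrt 5 * (α ^ 2 / (α ^ 3 + 2)) * α ^ m
        ≠ (Nat.fib n : ℝ) * ((1 + Real.sqrt 5) / 2) ^ k := by
  have hfib : 0 < Nat.fib n := Nat.fib_pos.2 hn
  have hαK := mem_adjoin_simple_self ℚ α
  have hmem : α ^ 2 / (α ^ 3 + 2) * α ^ m ∈ ℚ⟮α⟯ :=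
    mul_mem (div_mem (pow_mem hαK 2) (add_mem (pow_mem hαK 3) (ofNat_mem _ 2))) (pow_mem hαK m)
  have hne : √5 * (α ^ 2 / (α ^ 3 + 2) * α ^ m) ≠ (Nat.fib n : ℝ) * φ ^ k := by
    simpa using sqrt_five_mul_ne_mul_goldenRatio_pow (sqrt_five_notMem_adjoin_of_cubic hα) hmem
      (c := Nat.fib n) (by exact_mod_cast hfib.ne') k
  have hclose : |(Nat.fib n : ℝ) * Nat.fib k - α ^ 2 / (α ^ 3 + 2) * α ^ m| ≤ 1 / 2 := by
    simpa [narayanaError, h] using abs_narayanaError_le hα m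
  have hden : (Nat.fib n : ℝ) * φ ^ k ≠ 0 := by positivity
  simp only [mul_assoc (√5)]
  exact ⟨abs_pos.2 (sub_ne_zero.2 fun h1 ↦ hne ((div_eq_one_iff_eq hden).1 h1)),
    abs_sqrt_five_mul_div_sub_one_lt hn hclose, hne⟩

theorem linear_form_two_bound (α : ℝ) (hα : α ^ 3 - α ^ 2 - 1 = 0)
    (m n k : ℕ) (hm : 1 ≤ m) (hn : 1 ≤ n) (hk : 2 ≤ k)
    (h : narayana m = Nat.fib n * Nat.fib k) :
    0 < |Real.sqrt 5 * (α ^ 2 / (α ^ 3 + 2)) * α ^ m /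
          ((Nat.fib n : ℝ) * ((1 + Real.sqrt 5) / 2) ^ k) - 1| ∧
    |Real.sqrt 5 * (α ^ 2 / (α ^ 3 + 2)) * α ^ m /
          ((Nat.fib n : ℝ) * ((1 + Real.sqrt 5) / 2) ^ k) - 1|
        < 2.637 * ((1 + Real.sqrt 5) / 2) ^ (-(k : ℤ)) ∧
    Real.sqrt 5 * (α ^ 2 / (α ^ 3 + 2)) * α ^ m
        ≠ (Nat.fib n : ℝ) * ((1 + Real.sqrt 5) / 2) ^ k :=
  linear_form_two_bound_general α hα m n k hn h
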